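/- Let n ≥ 1 and let G be the fat fan of order n with base xyz, with apex y' and path vertices v_1, …, v_n. Let L be a list assignment with |L(y')| = 5 and |L(v_i)| = 3 for 1 ≤ i ≤ n. Then there exists at most one precoloring of the base xyz that does not extend to an L-coloring of G. -/

import Mathlib

/-- Vertices of the fat fan of order `n`: the base `x, y, z`, the apex `y'`,
and the path vertices `v 0, …, v (n-1)` (written `v_1, …, v_n` in the paper). -/
inductive FFVert (n : ℕ) : Type where
  | x | y | z | apex
  | v (i : Fin n)
deriving DecidableEq

/-- The fat fan of order `n` with base `x y z` and apex `y'`. -/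
def fatFan (n : ℕ) : SimpleGraph (FFVert n) :=
  SimpleGraph.fromEdgeSet (
    {s(FFVert.x, FFVert.y), s(FFVert.y, FFVert.z),
     s(FFVert.x, FFVert.apex), s(FFVert.y, FFVert.apex), s(FFVert.z, FFVert.apex)} ∪
    {e | ∃ i : Fin n, e = s(FFVert.apex, FFVert.v i)} ∪
    {e | ∃ i : Fin n, (i : ℕ) = 0 ∧ e = s(FFVert.x, FFVert.v i)} ∪
    {e | ∃ i j : Fin n, (i : ℕ) + 1 = (j : ℕ) ∧ e = s(FFVert.v i, FFVert.v j)} ∪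
    {e | ∃ i : Fin n, (i : ℕ) = n - 1 ∧ e = s(FFVert.v i, FFVert.z)})

/-- The precoloring of the base `x y z` by the colors `cx, cy, cz` extends to
an `L`-coloring of the fat fan of order `n`. -/
def ExtendsFF {n : ℕ} {α : Type*} (L : FFVert n → Finset α) (cx cy cz : α) : Prop :=
  ∃ ψ : FFVert n → α,
    (∀ u w : FFVert n, (fatFan n).Adj u w → ψ u ≠ ψ w) ∧
    ψ FFVert.x = cx ∧ ψ FFVert.y = cy ∧ ψ FFVert.z = cz ∧
    (∀ w : FFVert n, w ≠ FFVert.x → w ≠ FFVert.y → w ≠ FFVert.z → ψ w ∈ L w)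

/-!
Let `A` be the set of colours of `L(y')` not used on the base, so `|A| ≥ 2`. Giving the apex a
colour `c ∈ A` leaves every path vertex at least two colours, and the path `v₁ … vₙ` is then
coloured greedily starting from one end as soon as the vertex at the other end keeps two colours
after removing `c` and the colour of its base neighbour. Hence if `φ` does not extend, every
`c ∈ A` lies in `L(v₁)` and in `L(vₙ)`, as do `φ(x) ∈ L(v₁)` and `φ(z) ∈ L(vₙ)`. Counting forces
`A = L(v₁) \ {φ(x)} = L(vₙ) \ {φ(z)}` with `φ(x), φ(y), φ(z) ∈ L(y')` distinct, so `φ(x)`, `φ(z)`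
and `φ(y)` are the unique elements of `L(v₁) \ L(vₙ)`, `L(vₙ) \ L(v₁)` and
`L(y') \ (L(v₁) ∪ L(vₙ))`: a non-extendable precoloring is determined by `L`.
-/

open Finset

section

variable {α : Type*} [DecidableEq α]

theorem Finset.mem_of_card_erase_erase_add_two_le {s : Finset α} {a b : α}
    (h : #((s.erase a).erase b) + 2 ≤ #s) : a ∈ s ∧ b ∈ s := by
  constructor
  · by_contra ha
    rw [erase_eq_of_notMem ha] at h
    have := pred_card_le_card_erase (s := s) (a := b)
    omega
  · by_contra hb
    rw [erase_eq_of_notMem fun hb' => hb (mem_of_mem_erase hb')] at h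
    have := pred_card_le_card_erase (s := s) (a := a)
    omega

theorem sdiff_eq_singletons_of_forall_mem {P S T : Finset α} {a b c : α}
    (hP : #P = 5) (hS : #S = 3) (hT : #T = 3)
    (h : ∀ d ∈ P \ {a, b, c}, (a ∈ S ∧ d ∈ S) ∧ (c ∈ T ∧ d ∈ T)) :
    S \ T = {a} ∧ T \ S = {c} ∧ P \ (S ∪ T) = {b} := by
  set X : Finset α := {a, b, c}
  set A := P \ X
  have hX : #X ≤ 3 := card_le_three
  have hPX : #A + #(P ∩ X) = #P := card_sdiff_add_card_inter P X
  have hA : #P - #X ≤ #A := le_card_sdiff X P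
  obtain ⟨d, hd⟩ : A.Nonempty := card_pos.1 (by omega)
  obtain ⟨⟨haS, -⟩, hcT, -⟩ := h d hd
  have hAX (d : α) (hd : d ∈ A) : d ∉ X := (mem_sdiff.1 hd).2
  have hAS : A = S.erase a := eq_of_subset_of_card_le
    (fun d hd => mem_erase.2 ⟨by grind, (h d hd).1.2⟩) (by rw [card_erase_of_mem haS]; omega)
  have hAT : A = T.erase c := eq_of_subset_of_card_le
    (fun d hd => mem_erase.2 ⟨by grind, (h d hd).2.2⟩) (by rw [card_erase_of_mem hcT]; omega)
  rw [hAS, card_erase_of_mem haS, hS] at hPX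
  have hXP : P ∩ X = X := eq_of_subset_of_card_le inter_subset_right (by omega)
  have hX3 : #X = 3 := by rw [← hXP]; omega
  have hdistinct : a ≠ b ∧ a ≠ c ∧ b ≠ c := by
    refine ⟨?_, ?_, ?_⟩ <;> rintro rfl <;> grind
  refine ⟨?_, ?_, ?_⟩ <;> ext x <;>
    simp only [Finset.ext_iff, mem_sdiff, mem_erase, mem_inter, mem_union, mem_insert,
      mem_singleton, X, A] at hAS hAT hXP ⊢ <;>
    grind

def IsPathListColoring (M : ℕ → Finset α) (a b : α) (m : ℕ) (f : ℕ → α) : Prop :=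
  f 0 ≠ a ∧ f m ≠ b ∧ (∀ i ≤ m, f i ∈ M i) ∧ ∀ i < m, f i ≠ f (i + 1)

theorem exists_isPathListColoring_of_slack_right (M : ℕ → Finset α) (a b : α) (m : ℕ)
    (hM : ∀ i ≤ m, 2 ≤ #(M i)) (hslack : 2 ≤ #((M m).erase b)) :
    ∃ f, IsPathListColoring M a b m f := by
  induction m generalizing a M with
  | zero =>
    obtain ⟨d, hd⟩ : (((M 0).erase b).erase a).Nonempty := by
      rw [← card_pos]
      have := pred_card_le_card_erase (s := (M 0).erase b) (a := a)
      omega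
    simp only [mem_erase] at hd
    exact ⟨fun _ => d, hd.1, hd.2.1, by simp [hd.2.2], by simp⟩
  | succ m ih =>
    obtain ⟨d, hd⟩ : ((M 0).erase a).Nonempty := by
      rw [← card_pos]
      have := pred_card_le_card_erase (s := M 0) (a := a)
      have := hM 0 (by omega)
      omega
    obtain ⟨g, hg0, hgm, hgM, hgadj⟩ :=
      ih (fun i => M (i + 1)) d (fun i hi => hM (i + 1) (by omega)) hslack
    refine ⟨fun | 0 => d | i + 1 => g i, (mem_erase.1 hd).1, hgm, ?_, ?_⟩
    · rintro (_ | i) hi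
      exacts [(mem_erase.1 hd).2, hgM i (by omega)]
    · rintro (_ | i) hi
      exacts [hg0.symm, hgadj i (by omega)]

theorem exists_isPathListColoring_of_slack_left (M : ℕ → Finset α) (a b : α) (m : ℕ)
    (hM : ∀ i ≤ m, 2 ≤ #(M i)) (hslack : 2 ≤ #((M 0).erase a)) :
    ∃ f, IsPathListColoring M a b m f := by
  obtain ⟨g, hg0, hgm, hgM, hgadj⟩ := exists_isPathListColoring_of_slack_right
    (fun i => M (m - i)) b a m (fun i _ => hM _ (by omega)) (by simpa using hslack)
  refine ⟨fun i => g (m - i), by simpa using hgm, by simpa using hg0, fun i hi => ?_,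
    fun i hi => ?_⟩
  · simpa [Nat.sub_sub_self hi] using hgM (m - i) (by omega)
  · have h := hgadj (m - (i + 1)) (by omega)
    rw [show m - (i + 1) + 1 = m - i by omega] at h
    exact h.symm

end

section FatFan

variable {α : Type*} [DecidableEq α] {m : ℕ} {L : FFVert (m + 1) → Finset α}
  {cx cy cz c : α}

open Fin.NatCast in
theorem extendsFF_of_isPathListColoring (hxy : cx ≠ cy) (hyz : cy ≠ cz)
    (hc : c ∈ L .apex) (hcx : c ≠ cx) (hcy : c ≠ cy) (hcz : c ≠ cz) {f : ℕ → α}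
    (hf : IsPathListColoring (fun i => (L (.v i)).erase c) cx cz m f) :
    ExtendsFF L cx cy cz := by
  obtain ⟨hf0, hfm, hfL, hadj⟩ := hf
  have hfL (i : Fin (m + 1)) : f i ∈ (L (.v i)).erase c := by simpa using hfL i (by omega)
  have hfc (i : Fin (m + 1)) : f i ≠ c := (mem_erase.1 (hfL i)).1
  refine ⟨fun | .x => cx | .y => cy | .z => cz | .apex => c | .v i => f i,
    fun u w h => ?_, rfl, rfl, rfl, ?_⟩
  · simp only [fatFan, SimpleGraph.fromEdgeSet_adj, Set.mem_union, Set.mem_insert_iff,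
      Set.mem_singleton_iff, Set.mem_ofPred_eq] at h
    rcases h.1 with
      ((((h | h | h | h | h) | ⟨i, h⟩) | ⟨i, hi, h⟩) | ⟨i, j, hij, h⟩) | ⟨i, hi, h⟩ <;>
      rcases Sym2.eq_iff.1 h with ⟨rfl, rfl⟩ | ⟨rfl, rfl⟩ <;> grind
  · rintro (_ | _ | _ | _ | i) hx hy hz
    exacts [(hx rfl).elim, (hy rfl).elim, (hz rfl).elim, hc, mem_of_mem_erase (hfL i)]

open Fin.NatCast in
theorem extendsFF_of_slack (hlist : ∀ i, #(L (.v i)) = 3)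
    (hxy : cx ≠ cy) (hyz : cy ≠ cz) (hc : c ∈ L .apex) (hcx : c ≠ cx) (hcy : c ≠ cy)
    (hcz : c ≠ cz) (hslack : 2 ≤ #(((L (.v 0)).erase c).erase cx) ∨
      2 ≤ #(((L (.v (Fin.last m))).erase c).erase cz)) :
    ExtendsFF L cx cy cz := by
  have hM (i : ℕ) (_ : i ≤ m) : 2 ≤ #((L (.v i)).erase c) := by
    have := pred_card_le_card_erase (s := L (.v i)) (a := c)
    rw [hlist] at this
    omega
  obtain ⟨f, hf⟩ := hslack.elim
    (fun h => exists_isPathListColoring_of_slack_left _ cx cz m hM (by simpa using h))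
    (fun h => exists_isPathListColoring_of_slack_right _ cx cz m hM (by simpa using h))
  exact extendsFF_of_isPathListColoring hxy hyz hc hcx hcy hcz hf

theorem mem_of_not_extendsFF (hlist : ∀ i, #(L (.v i)) = 3)
    (hxy : cx ≠ cy) (hyz : cy ≠ cz) (hext : ¬ ExtendsFF L cx cy cz)
    (hc : c ∈ L .apex \ {cx, cy, cz}) :
    (cx ∈ L (.v 0) ∧ c ∈ L (.v 0)) ∧
      (cz ∈ L (.v (Fin.last m)) ∧ c ∈ L (.v (Fin.last m))) := by
  simp only [mem_sdiff, mem_insert, mem_singleton, not_or] at hc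
  obtain ⟨hc, hcx, hcy, hcz⟩ := hc
  have hslack : ¬ _ := fun h => hext (extendsFF_of_slack hlist hxy hyz hc hcx hcy hcz h)
  rw [not_or, not_le, not_le] at hslack
  constructor
  · exact (mem_of_card_erase_erase_add_two_le (by rw [hlist]; omega)).symm
  · exact (mem_of_card_erase_erase_add_two_le (by rw [hlist]; omega)).symm

end FatFan

/-- For a fat fan with apex list of size `5` and path lists of size `3`,
at most one precoloring of the base fails to extend. -/
theorem fatFan_at_most_one_nonextendable {n : ℕ} {α : Type*}
    (hn : 1 ≤ n) (L : FFVert n → Finset α)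
    (hapex : (L FFVert.apex).card = 5)
    (hlist : ∀ i : Fin n, (L (FFVert.v i)).card = 3)
    (cx cy cz cx' cy' cz' : α)
    (hxy : cx ≠ cy) (hyz : cy ≠ cz) (hxy' : cx' ≠ cy') (hyz' : cy' ≠ cz')
    (hext : ¬ ExtendsFF L cx cy cz) (hext' : ¬ ExtendsFF L cx' cy' cz') :
    cx = cx' ∧ cy = cy' ∧ cz = cz' := by
  classical
  obtain ⟨m, rfl⟩ : ∃ m, n = m + 1 := ⟨n - 1, by omega⟩
  obtain ⟨hx, hz, hy⟩ := sdiff_eq_singletons_of_forall_mem hapex (hlist 0)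
    (hlist (Fin.last m)) fun c hc => mem_of_not_extendsFF hlist hxy hyz hext hc
  obtain ⟨hx', hz', hy'⟩ := sdiff_eq_singletons_of_forall_mem hapex (hlist 0)
    (hlist (Fin.last m)) fun c hc => mem_of_not_extendsFF hlist hxy' hyz' hext' hc
  exact ⟨singleton_injective (hx.symm.trans hx'), singleton_injective (hy.symm.trans hy'),
    singleton_injective (hz.symm.trans hz')⟩
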